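/- Let z = x + iy be a complex number with y ≠ 0. Then the function X, defined by X(w) = β(w)·√(α(w)²−1) + i·sign(Im w)·α(w)·√(1−β(w)²) with α(w) = (|w−1|+|w+1|)/2 and β(w) = (|w+1|−|w−1|)/2, is complex differentiable at z with derivative X′(z) = z/X(z). -/

import Mathlib

open Complex

/-- `α(w) = (|w-1| + |w+1|)/2`. -/
noncomputable def alpha (w : ℂ) : ℝ := (‖w - 1‖ + ‖w + 1‖) / 2

/-- `β(w) = (|w+1| - |w-1|)/2`. -/
noncomputable def beta (w : ℂ) : ℝ := (‖w + 1‖ - ‖w - 1‖) / 2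

/-- Principal branch `X(w)` of `√(w²-1)` on the cut plane `ℂ ∖ (-1, 1)`. -/
noncomputable def X (w : ℂ) : ℂ :=
  (beta w * Real.sqrt ((alpha w) ^ 2 - 1) : ℝ) +
    Complex.I * (Real.sign w.im : ℝ) * (alpha w * Real.sqrt (1 - (beta w) ^ 2) : ℝ)

/-!
Off the real axis, `X` is continuous (the sign of `Im w` is locally constant) and squares to
`w ^ 2 - 1`, because `α β = Re w` and `α ^ 2 + β ^ 2 = |w| ^ 2 + 1`. A continuous square root `f`
of a differentiable `g` with `f z ≠ 0` is differentiable at `z`: its difference quotient is that of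
`g` divided by `f w + f z → 2 f z`. Hence `X' = 2 z / (2 X z)`.
-/

open Filter Topology

theorem HasDerivAt.of_eventually_sq_eq {𝕜 : Type*} [NontriviallyNormedField 𝕜] [CharZero 𝕜]
    {f g : 𝕜 → 𝕜} {g' z : 𝕜} (hg : HasDerivAt g g' z) (hf : ContinuousAt f z)
    (hfz : f z ≠ 0) (hsq : ∀ᶠ w in 𝓝 z, f w ^ 2 = g w) :
    HasDerivAt f (g' / (2 * f z)) z := by
  rw [hasDerivAt_iff_tendsto_slope] at hg ⊢
  have hsum : Tendsto (fun w => f w + f z) (𝓝[≠] z) (𝓝 (2 * f z)) := by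
    rw [two_mul]; exact (hf.add continuousAt_const).mono_left nhdsWithin_le_nhds
  refine (hg.div hsum (mul_ne_zero two_ne_zero hfz)).congr' ?_
  have hne : ∀ᶠ w in 𝓝[≠] z, f w + f z ≠ 0 :=
    hsum.eventually_ne (mul_ne_zero two_ne_zero hfz)
  filter_upwards [hne, nhdsWithin_le_nhds hsq] with w hw hw2
  rw [Pi.div_apply, slope_def_field, slope_def_field, ← hw2, ← hsq.self_of_nhds]
  field_simp
  ring

theorem norm_sub_one_sq (w : ℂ) : ‖w - 1‖ ^ 2 = (w.re - 1) ^ 2 + w.im ^ 2 := by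
  rw [← normSq_eq_norm_sq, normSq_apply]
  simp only [sub_re, one_re, sub_im, one_im, sub_zero]
  ring

theorem norm_add_one_sq (w : ℂ) : ‖w + 1‖ ^ 2 = (w.re + 1) ^ 2 + w.im ^ 2 := by
  rw [← normSq_eq_norm_sq, normSq_apply]
  simp only [add_re, one_re, add_im, one_im, add_zero]
  ring

theorem alpha_mul_beta (w : ℂ) : alpha w * beta w = w.re := by
  unfold alpha beta
  linear_combination (norm_add_one_sq w - norm_sub_one_sq w) / 4

theorem alpha_sq_add_beta_sq (w : ℂ) : alpha w ^ 2 + beta w ^ 2 = w.re ^ 2 + w.im ^ 2 + 1 := by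
  unfold alpha beta
  linear_combination (norm_add_one_sq w + norm_sub_one_sq w) / 2

theorem one_le_alpha (w : ℂ) : 1 ≤ alpha w := by
  have : ‖(1 - w) + (w + 1)‖ ≤ ‖1 - w‖ + ‖w + 1‖ := norm_add_le _ _
  rw [norm_sub_rev, show 1 - w + (w + 1) = 2 by ring] at this
  norm_num at this
  unfold alpha; linarith

theorem beta_sq_le_one (w : ℂ) : beta w ^ 2 ≤ 1 := by
  have : |‖w + 1‖ - ‖w - 1‖| ≤ ‖(w + 1) - (w - 1)‖ := abs_norm_sub_norm_le _ _
  norm_num at this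
  unfold beta
  nlinarith [abs_le.mp this]

theorem X_sq (w : ℂ) (h : w.im ≠ 0) : X w ^ 2 = w ^ 2 - 1 := by
  have hA : 0 ≤ alpha w ^ 2 - 1 := by nlinarith [one_le_alpha w]
  have hB : 0 ≤ 1 - beta w ^ 2 := by linarith [beta_sq_le_one w]
  have hprod : √(alpha w ^ 2 - 1) * √(1 - beta w ^ 2) = |w.im| := by
    rw [← Real.sqrt_mul hA, ← Real.sqrt_sq_eq_abs]
    congr 1
    linear_combination alpha_sq_add_beta_sq w - (alpha w * beta w + w.re) * alpha_mul_beta w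
  have hsign : Real.sign w.im * |w.im| = w.im := by
    rcases h.lt_or_gt with hn | hp
    · rw [Real.sign_of_neg hn, abs_of_neg hn]; ring
    · rw [Real.sign_of_pos hp, abs_of_pos hp]; ring
  have hsign_sq : Real.sign w.im ^ 2 = 1 := by
    rcases h.lt_or_gt with hn | hp
    · rw [Real.sign_of_neg hn]; norm_num
    · rw [Real.sign_of_pos hp]; norm_num
  have hsA := Real.sq_sqrt hA
  have hsB := Real.sq_sqrt hB
  rw [sq (X w), sq w]
  apply Complex.ext
  · simp only [X, ofReal_mul, mul_re, add_re, ofReal_re, ofReal_im, mul_zero, sub_zero, I_re,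
      zero_mul, I_im, sub_self, mul_im, one_mul, zero_add, add_zero, add_im, sub_re, one_re]
    linear_combination beta w ^ 2 * hsA - Real.sign w.im ^ 2 * alpha w ^ 2 * hsB
      - alpha w ^ 2 * (1 - beta w ^ 2) * hsign_sq - alpha_sq_add_beta_sq w
      + 2 * (alpha w * beta w + w.re) * alpha_mul_beta w
  · simp only [X, ofReal_mul, mul_im, add_re, mul_re, ofReal_re, ofReal_im, mul_zero, sub_zero,
      I_re, zero_mul, I_im, sub_self, one_mul, zero_add, add_zero, add_im, sub_im, one_im]
    linear_combination 2 * Real.sign w.im * alpha w * beta w * hprod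
      + 2 * alpha w * beta w * hsign + 2 * w.im * alpha_mul_beta w

theorem Real.eventually_sign_eq {a : ℝ} (h : a ≠ 0) :
    ∀ᶠ x in 𝓝 a, Real.sign x = Real.sign a := by
  rcases h.lt_or_gt with hn | hp
  · filter_upwards [eventually_lt_nhds hn] with x hx
    rw [Real.sign_of_neg hx, Real.sign_of_neg hn]
  · filter_upwards [eventually_gt_nhds hp] with x hx
    rw [Real.sign_of_pos hx, Real.sign_of_pos hp]

theorem continuousAt_X (z : ℂ) (h : z.im ≠ 0) : ContinuousAt X z := by
  have hsign : ContinuousAt (fun w : ℂ => Real.sign w.im) z :=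
    (continuousAt_const.congr ((Real.eventually_sign_eq h).mono fun _ h => h.symm)).comp
      Complex.continuous_im.continuousAt
  unfold X alpha beta
  fun_prop

theorem X_ne_zero {w : ℂ} (h : w.im ≠ 0) : X w ≠ 0 := by
  intro h0
  have hw : w ^ 2 = 1 := by linear_combination -(X_sq w h) + X w * h0
  rcases sq_eq_one_iff.mp hw with rfl | rfl <;> simp at h

theorem stmt4 (z : ℂ) (h : z.im ≠ 0) : HasDerivAt X (z / X z) z := by
  have hsq : ∀ᶠ w in 𝓝 z, X w ^ 2 = w ^ 2 - 1 :=
    (Complex.continuous_im.continuousAt.eventually_ne h).mono X_sq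
  have hg : HasDerivAt (fun w : ℂ => w ^ 2 - 1) (2 * z) z := by
    simpa using (hasDerivAt_pow 2 z).sub_const 1
  have hX := hg.of_eventually_sq_eq (continuousAt_X z h) (X_ne_zero h) hsq
  rwa [mul_div_mul_left _ _ two_ne_zero] at hX
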